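/- Let Γ be a reflexive relation on V with Γ(x) finite for all x, and fix v ∈ V. If F₁ and F₂ are both v-molecules (finite v-Moser sets achieving the minimum boundary size μ(v)), then F₁ ∩ F₂ and F₁ ∪ F₂ are v-molecules. -/

import Mathlib

open Set Pointwise

variable {V : Type*}

/-- Image of a set under the relation. -/
def img (Γ : V → Set V) (F : Set V) : Set V := ⋃ x ∈ F, Γ x
/-- Reverse relation. -/
def rev (Γ : V → Set V) : V → Set V := fun y => {x | y ∈ Γ x}
/-- Boundary ∂(F) = Γ(F) \ F. -/
def bd (Γ : V → Set V) (F : Set V) : Set V := img Γ F \ F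
/-- ∇(F) = V \ (F ∪ Γ(F)). -/
def nab (Γ : V → Set V) (F : Set V) : Set V := (F ∪ img Γ F)ᶜ
/-- Reflexive relation. -/
def Refl (Γ : V → Set V) : Prop := ∀ x, x ∈ Γ x
/-- Locally finite relation. -/
def LocFin (Γ : V → Set V) : Prop := ∀ x, (Γ x).Finite
/-- Automorphism of the relation. -/
def IsAuto (Γ : V → Set V) (φ : V ≃ V) : Prop := ∀ x, Γ (φ x) = φ '' Γ x
/-- Vertex-transitivity. -/
def VT (Γ : V → Set V) : Prop := ∀ x y : V, ∃ φ : V ≃ V, IsAuto Γ φ ∧ φ x = y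
/-- A finite v-Moser set. -/
def MoserSet (Γ : V → Set V) (v : V) (F : Set V) : Prop :=
  F.Finite ∧ v ∈ F ∧ rev Γ v ∩ F = {v}
/-- μ(v): minimum boundary size over v-Moser sets. -/
noncomputable def mu (Γ : V → Set V) (v : V) : ℕ :=
  sInf {n | ∃ F, MoserSet Γ v F ∧ (bd Γ F).ncard = n}
/-- A v-molecule: Moser set of minimum boundary. -/
def Molecule (Γ : V → Set V) (v : V) (F : Set V) : Prop :=
  MoserSet Γ v F ∧ (bd Γ F).ncard = mu Γ v
/-- The v-kernel: the unique minimal v-molecule. -/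
def IsKernel (Γ : V → Set V) (v : V) (K : Set V) : Prop :=
  Molecule Γ v K ∧ ∀ F, Molecule Γ v F → K ⊆ F
/-- Weak connectivity κ₀. -/
noncomputable def kappa0 (Γ : V → Set V) : ℕ :=
  sInf {n | ∃ X : Set V, X.Finite ∧ X.Nonempty ∧ (bd Γ X).ncard = n}
/-- Weak fragment. -/
def WeakFragment (Γ : V → Set V) (X : Set V) : Prop :=
  X.Finite ∧ X.Nonempty ∧ (bd Γ X).ncard = kappa0 Γ
/-- Weak atom: a weak fragment of minimum cardinality. -/
def WeakAtom (Γ : V → Set V) (X : Set V) : Prop :=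
  WeakFragment Γ X ∧ ∀ Y, WeakFragment Γ Y → X.ncard ≤ Y.ncard

/-! Since Γ is reflexive, `|∂X| = |Γ(X)| - |X|` for finite `X`. Cardinality is modular,
`Γ(A ∪ B) = Γ(A) ∪ Γ(B)` and `Γ(A ∩ B) ⊆ Γ(A) ∩ Γ(B)`, so `X ↦ |∂X|` is submodular.
The v-Moser sets are closed under `∩` and `∪`, hence for two v-molecules
`|∂(F₁ ∩ F₂)| + |∂(F₁ ∪ F₂)| ≤ 2 μ(v)` with both terms at least `μ(v)`. -/

section Boundary

variable {Γ : V → Set V}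

lemma img_finite (hlf : LocFin Γ) {F : Set V} (hF : F.Finite) : (img Γ F).Finite :=
  hF.biUnion fun x _ => hlf x

lemma subset_img (hr : Refl Γ) (F : Set V) : F ⊆ img Γ F :=
  fun x hx => mem_biUnion hx (hr x)

lemma img_mono {A B : Set V} (h : A ⊆ B) : img Γ A ⊆ img Γ B :=
  biUnion_mono h fun _ _ => le_rfl

lemma img_union (A B : Set V) : img Γ (A ∪ B) = img Γ A ∪ img Γ B :=
  biUnion_union A B Γ

lemma img_inter_subset (A B : Set V) : img Γ (A ∩ B) ⊆ img Γ A ∩ img Γ B :=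
  subset_inter (img_mono inter_subset_left) (img_mono inter_subset_right)

lemma ncard_bd_add_ncard (hr : Refl Γ) (hlf : LocFin Γ) {F : Set V} (hF : F.Finite) :
    (bd Γ F).ncard + F.ncard = (img Γ F).ncard :=
  ncard_sdiff_add_ncard_of_subset (subset_img hr F) (img_finite hlf hF)

lemma ncard_bd_inter_add_ncard_bd_union_le (hr : Refl Γ) (hlf : LocFin Γ) {A B : Set V}
    (hA : A.Finite) (hB : B.Finite) :
    (bd Γ (A ∩ B)).ncard + (bd Γ (A ∪ B)).ncard ≤ (bd Γ A).ncard + (bd Γ B).ncard := by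
  have hΓA := img_finite hlf hA
  have hΓB := img_finite hlf hB
  have hsets := ncard_union_add_ncard_inter A B hA hB
  have himgs := ncard_union_add_ncard_inter _ _ hΓA hΓB
  have himg_inter : (img Γ (A ∩ B)).ncard ≤ (img Γ A ∩ img Γ B).ncard :=
    ncard_le_ncard (img_inter_subset A B) (hΓA.inter_of_left _)
  have himg_union : (img Γ (A ∪ B)).ncard = (img Γ A ∪ img Γ B).ncard := by
    rw [img_union]
  have hbdA := ncard_bd_add_ncard hr hlf hA
  have hbdB := ncard_bd_add_ncard hr hlf hB
  have hbd_inter := ncard_bd_add_ncard hr hlf (hA.inter_of_left B)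
  have hbd_union := ncard_bd_add_ncard hr hlf (hA.union hB)
  omega

end Boundary

namespace MoserSet

variable {Γ : V → Set V} {v : V} {F₁ F₂ : Set V}

lemma inter (h₁ : MoserSet Γ v F₁) (h₂ : MoserSet Γ v F₂) : MoserSet Γ v (F₁ ∩ F₂) := by
  obtain ⟨hF₁, hv₁, hrev₁⟩ := h₁
  refine ⟨hF₁.inter_of_left _, ⟨hv₁, h₂.2.1⟩, ?_⟩
  have hv_rev : v ∈ rev Γ v := (hrev₁.ge (mem_singleton v)).1
  apply Subset.antisymm
  · rw [← hrev₁, ← inter_assoc]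
    exact inter_subset_left
  · rw [singleton_subset_iff]
    exact ⟨hv_rev, hv₁, h₂.2.1⟩

lemma union (h₁ : MoserSet Γ v F₁) (h₂ : MoserSet Γ v F₂) : MoserSet Γ v (F₁ ∪ F₂) :=
  ⟨h₁.1.union h₂.1, Or.inl h₁.2.1, by rw [inter_union_distrib_left, h₁.2.2, h₂.2.2, union_self]⟩

lemma mu_le_ncard_bd {F : Set V} (h : MoserSet Γ v F) : mu Γ v ≤ (bd Γ F).ncard :=
  Nat.sInf_le ⟨F, h, rfl⟩

end MoserSet

/-- Intersection and union of two v-molecules are v-molecules. -/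
theorem stmt4 {V : Type*} (Γ : V → Set V) (hr : Refl Γ) (hlf : LocFin Γ)
    (v : V) (F₁ F₂ : Set V) (h₁ : Molecule Γ v F₁) (h₂ : Molecule Γ v F₂) :
    Molecule Γ v (F₁ ∩ F₂) ∧ Molecule Γ v (F₁ ∪ F₂) := by
  obtain ⟨hM₁, hbd₁⟩ := h₁
  obtain ⟨hM₂, hbd₂⟩ := h₂
  have hsub := ncard_bd_inter_add_ncard_bd_union_le hr hlf hM₁.1 hM₂.1
  have hinter := (hM₁.inter hM₂).mu_le_ncard_bd
  have hunion := (hM₁.union hM₂).mu_le_ncard_bd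
  exact ⟨⟨hM₁.inter hM₂, by omega⟩, ⟨hM₁.union hM₂, by omega⟩⟩
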